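/- Let A be a finite set of atoms, let P be a proper A-program, and let a ∈ At(P) \ A. Then A ∪ {a} is an A-based stable model of P if and only if F(a) = 0, G(a) > 0, and there exists a Horn program Q ∈ 𝒫(A) such that H(r,a) > 0 for every rule r ∈ Q. -/

import Mathlib

/-!
Since `P` is an `A`-program, the reduct `P^(A ∪ {a})` is the Horn program `R` of the rules of
`P` not blocked by `a`, and all bodies of `R` lie in `A`. So once `A` is derived every rule of `R`
fires, and `LM R = A ∪ {a}` says exactly: all heads of `R` lie in `A ∪ {a}` (`F(a) = 0`), some
rule of `R` has head `a` (`G(a) > 0`), and the rules of `R` with head in `A` derive `A` by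
themselves, because no atom of `A` can be derived through `a`. Those rules lie in `R(A)` by
properness, and the rules with `H(r,a) > 0` are precisely the rules of `R`.
-/

open scoped Classical

noncomputable section

/-- A propositional logic program rule: a head atom, a finite positive body and a
finite negative body. -/
structure LPRule (α : Type) where
  head : α
  pos : Finset α
  neg : Finset α
deriving DecidableEq

/-- A logic program is a finite set of rules. -/
abbrev LProgram (α : Type) := Finset (LPRule α)

variable {α : Type} [DecidableEq α]

/-- `horn r`: the Horn rule with the same head and positive body as `r`
and empty negative body. -/
def LPRule.horn (r : LPRule α) : LPRule α := ⟨r.head, r.pos, ∅⟩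

/-- A rule `r` is proper if `h(r) ∉ b⁺(r)` and `b⁺(r) ∩ b⁻(r) = ∅`. -/
def LPRule.proper (r : LPRule α) : Prop := r.head ∉ r.pos ∧ r.pos ∩ r.neg = ∅

/-- `At(P)`: the set of atoms occurring in `P`. -/
def atomsP (P : LProgram α) : Finset α := P.sup (fun r => insert r.head (r.pos ∪ r.neg))

/-- `h(P)`: the set of heads of rules of `P`. -/
def headsP (P : LProgram α) : Finset α := P.image LPRule.head

/-- `Neg(P)`: the set of atoms occurring negated in `P`. -/
def negP (P : LProgram α) : Finset α := P.sup LPRule.neg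

/-- The least model of a (Horn) program `Q`, given as a set of rules (negative bodies
are ignored; Horn rules have empty negative bodies): the least set `M` of atoms such
that `h(r) ∈ M` whenever `r ∈ Q` and `b⁺(r) ⊆ M`. -/
def LM (Q : Set (LPRule α)) : Set α :=
  ⋂₀ {M : Set α | ∀ r ∈ Q, (↑r.pos : Set α) ⊆ M → r.head ∈ M}

/-- The reduct `P^S`: delete every rule whose negative body meets `S` and remove the
negative bodies of the remaining rules. -/
def reduct (P : LProgram α) (S : Set α) : Set (LPRule α) :=
  LPRule.horn '' {r | r ∈ P ∧ (↑r.neg : Set α) ∩ S = ∅}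

/-- `M` is a stable model of `P` if `M = LM (P^M)`. -/
def isStable (P : LProgram α) (M : Set α) : Prop :=
  M = LM (reduct P M)

/-- `P(A)`: the rules `r` of `P` with `b⁻(r) ∩ A = ∅` and `b⁺(r) ⊆ A`. -/
def progA (P : LProgram α) (A : Set α) : LProgram α :=
  P.filter (fun r => (↑r.pos : Set α) ⊆ A ∧ (↑r.neg : Set α) ∩ A = ∅)

/-- `M` is an `A`-based stable model of `P`: `M` is a stable model of `P` of the form
`A ∪ {a}` for some atom `a ∉ A`, and `M ⊆ LM (P(A)^M)`. -/
def isABased (P : LProgram α) (A M : Set α) : Prop :=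
  isStable P M ∧ ∃ a, a ∉ A ∧ M = A ∪ {a} ∧ M ⊆ LM (reduct (progA P A) M)

/-- `F(a) = 1` if there is a rule `s ∈ P` with `h(s) ∉ A ∪ {a}` and `a ∉ b⁻(s)`,
and `F(a) = 0` otherwise. -/
def Fval (P : LProgram α) (A : Set α) (a : α) : ℕ :=
  if ∃ s ∈ P, s.head ∉ A ∪ {a} ∧ a ∉ s.neg then 1 else 0

/-- `G(a)`: the number of rules `s ∈ P` with `h(s) = a` and `a ∉ b⁻(s)`. -/
def Gval (P : LProgram α) (a : α) : ℕ :=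
  (P.filter (fun s => s.head = a ∧ a ∉ s.neg)).card

/-- `H(r,a) = 1` if there is a rule `s ∈ P` with `horn(s) = r` and `a ∉ b⁻(s)`,
and `H(r,a) = 0` otherwise. -/
def Hval (P : LProgram α) (r : LPRule α) (a : α) : ℕ :=
  if ∃ s ∈ P, s.horn = r ∧ a ∉ s.neg then 1 else 0

/-- `R(A)`: the set of all proper Horn rules whose head and positive body use only
atoms of `A`. -/
def RA (A : Finset α) : Set (LPRule α) :=
  {r | r.neg = ∅ ∧ r.head ∈ A ∧ r.pos ⊆ A ∧ r.proper}


section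

omit [DecidableEq α]

lemma LM_subset_of_closed {Q : Set (LPRule α)} {M : Set α}
    (hM : ∀ r ∈ Q, (↑r.pos : Set α) ⊆ M → r.head ∈ M) : LM Q ⊆ M :=
  Set.sInter_subset_of_mem hM

lemma head_mem_LM {Q : Set (LPRule α)} {r : LPRule α} (hr : r ∈ Q)
    (hpos : (↑r.pos : Set α) ⊆ LM Q) : r.head ∈ LM Q :=
  Set.mem_sInter.2 fun _ hM => hM r hr (hpos.trans (Set.sInter_subset_of_mem hM))

lemma LM_mono {Q R : Set (LPRule α)} (h : Q ⊆ R) : LM Q ⊆ LM R :=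
  Set.sInter_subset_sInter fun _ hM r hr => hM r (h hr)

lemma LM_subset_of_forall_head_mem {Q : Set (LPRule α)} {S : Set α}
    (h : ∀ r ∈ Q, r.head ∈ S) : LM Q ⊆ S :=
  LM_subset_of_closed fun r hr _ => h r hr

lemma exists_head_eq_of_mem_LM {Q : Set (LPRule α)} {x : α} (hx : x ∈ LM Q) :
    ∃ r ∈ Q, r.head = x :=
  LM_subset_of_forall_head_mem (S := {x | ∃ r ∈ Q, r.head = x}) (fun r hr => ⟨r, hr, rfl⟩) hx

/-- Rules with head outside `A` never feed a body, so dropping them loses no atom of `A`. -/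
lemma LM_inter_subset_LM_sep {Q : Set (LPRule α)} {A : Set α}
    (hbody : ∀ r ∈ Q, (↑r.pos : Set α) ⊆ A) : LM Q ∩ A ⊆ LM {r ∈ Q | r.head ∈ A} := by
  suffices LM Q ⊆ LM {r ∈ Q | r.head ∈ A} ∪ Aᶜ from
    fun x ⟨hxQ, hxA⟩ => (this hxQ).resolve_right (not_not.2 hxA)
  refine LM_subset_of_closed fun r hr hpos => ?_
  by_cases hhead : r.head ∈ A
  · refine Or.inl (head_mem_LM ⟨hr, hhead⟩ fun x hx => ?_)
    exact (hpos hx).resolve_right (not_not.2 (hbody r hr hx))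
  · exact Or.inr hhead

lemma LM_eq_union_singleton_iff {Q : Set (LPRule α)} {A : Set α} {a : α}
    (hbody : ∀ r ∈ Q, (↑r.pos : Set α) ⊆ A) :
    LM Q = A ∪ {a} ↔ (∀ r ∈ Q, r.head ∈ A ∪ {a}) ∧ (∃ r ∈ Q, r.head = a) ∧
      A ⊆ LM {r ∈ Q | r.head ∈ A} := by
  constructor
  · intro hLM
    have hA : A ⊆ LM Q := hLM ▸ Set.subset_union_left
    refine ⟨fun r hr => hLM ▸ head_mem_LM hr ((hbody r hr).trans hA), ?_, ?_⟩
    · exact exists_head_eq_of_mem_LM (hLM ▸ Set.mem_union_right A rfl)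
    · exact fun x hx => LM_inter_subset_LM_sep hbody ⟨hA hx, hx⟩
  · rintro ⟨hheads, ⟨r, hr, rfl⟩, hA⟩
    have hA' : A ⊆ LM Q := hA.trans (LM_mono (Set.sep_subset _ _))
    refine (LM_subset_of_forall_head_mem hheads).antisymm (Set.union_subset hA' ?_)
    exact Set.singleton_subset_iff.2 (head_mem_LM hr ((hbody r hr).trans hA'))

def IsAProgram (A : Set α) (P : LProgram α) : Prop :=
  ∀ r ∈ P, (↑r.pos : Set α) ⊆ A ∧ (↑r.neg : Set α) ∩ A = ∅

lemma progA_eq_self {A : Set α} {P : LProgram α} (hP : IsAProgram A P) : progA P A = P :=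
  Finset.filter_true_of_mem hP

lemma isABased_iff_isStable {A : Set α} {P : LProgram α} (hP : IsAProgram A P) {a : α}
    (haA : a ∉ A) : isABased P A (A ∪ {a}) ↔ isStable P (A ∪ {a}) := by
  refine ⟨And.left, fun hst => ⟨hst, a, haA, rfl, ?_⟩⟩
  rw [progA_eq_self hP, ← hst]

end

lemma exists_subset_RA_LM_eq_iff {A : Finset α} {R : LProgram α}
    (hR : ∀ r ∈ R, r.head ∈ A → r ∈ RA A) :
    (∃ Q : LProgram α, ↑Q ⊆ RA A ∧ LM (↑Q : Set (LPRule α)) = (↑A : Set α) ∧ Q ⊆ R) ↔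
      (↑A : Set α) ⊆ LM {r ∈ (↑R : Set (LPRule α)) | r.head ∈ A} := by
  constructor
  · rintro ⟨Q, hQRA, hQLM, hQR⟩
    exact hQLM.symm.subset.trans (LM_mono fun r hr => ⟨hQR hr, (hQRA hr).2.1⟩)
  · intro hA
    refine ⟨R.filter (·.head ∈ A), fun r hr => ?_, ?_, Finset.filter_subset _ _⟩
    · obtain ⟨hrR, hhead⟩ := Finset.mem_filter.1 hr
      exact hR r hrR hhead
    · rw [Finset.coe_filter]
      exact (LM_subset_of_forall_head_mem fun r hr => hr.2).antisymm hA

/-- The reduct `P^{a}`, as a finite Horn program. -/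
def reductSingleton (P : LProgram α) (a : α) : LProgram α :=
  (P.filter fun s => a ∉ s.neg).image LPRule.horn

lemma mem_reductSingleton {P : LProgram α} {a : α} {r : LPRule α} :
    r ∈ reductSingleton P a ↔ ∃ s ∈ P, s.horn = r ∧ a ∉ s.neg := by
  simp only [reductSingleton, Finset.mem_image, Finset.mem_filter, and_assoc]
  exact exists_congr fun s => ⟨fun ⟨hs, hn, h⟩ => ⟨hs, h, hn⟩, fun ⟨hs, h, hn⟩ => ⟨hs, hn, h⟩⟩

lemma reduct_union_singleton {A : Set α} {P : LProgram α} (hP : IsAProgram A P) (a : α) :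
    reduct P (A ∪ {a}) = ↑(reductSingleton P a) := by
  ext r
  simp only [reduct, Set.mem_image, Set.mem_ofPred_eq, Finset.mem_coe, mem_reductSingleton]
  refine exists_congr fun s => ⟨fun ⟨⟨hs, hn⟩, h⟩ => ⟨hs, h, ?_⟩, fun ⟨hs, h, hn⟩ => ⟨⟨hs, ?_⟩, h⟩⟩
  · exact fun ha => hn.subset ⟨Finset.mem_coe.2 ha, Or.inr rfl⟩
  · rw [Set.inter_union_distrib_left, (hP s hs).2, Set.empty_union,
      Set.inter_singleton_eq_empty]
    exact hn

lemma pos_subset_of_mem_reductSingleton {A : Set α} {P : LProgram α} (hP : IsAProgram A P)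
    {a : α} {r : LPRule α} (hr : r ∈ reductSingleton P a) : (↑r.pos : Set α) ⊆ A := by
  obtain ⟨s, hs, rfl, -⟩ := mem_reductSingleton.1 hr
  exact (hP s hs).1

lemma mem_RA_of_mem_reductSingleton {A : Finset α} {P : LProgram α} (hP : IsAProgram ↑A P)
    (hproper : ∀ r ∈ P, r.proper) {a : α} {r : LPRule α} (hr : r ∈ reductSingleton P a)
    (hhead : r.head ∈ A) : r ∈ RA A := by
  obtain ⟨s, hs, rfl, -⟩ := mem_reductSingleton.1 hr
  exact ⟨rfl, hhead, Finset.coe_subset.1 (hP s hs).1, (hproper s hs).1, Finset.inter_empty _⟩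

lemma Fval_eq_zero_iff {P : LProgram α} {A : Set α} {a : α} :
    Fval P A a = 0 ↔ ∀ r ∈ reductSingleton P a, r.head ∈ A ∪ {a} := by
  simp only [Fval, ite_eq_right_iff, one_ne_zero, imp_false, not_exists, not_and,
    mem_reductSingleton, forall_exists_index, and_imp]
  constructor
  · rintro h _ s hs rfl hn
    by_contra hhead
    exact h s hs hhead hn
  · exact fun h s hs hhead hn => hhead (h s.horn s hs rfl hn)

lemma Gval_pos_iff {P : LProgram α} {a : α} :
    0 < Gval P a ↔ ∃ r ∈ reductSingleton P a, r.head = a := by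
  simp only [Gval, Finset.card_pos, Finset.Nonempty, Finset.mem_filter, mem_reductSingleton]
  constructor
  · rintro ⟨s, hs, hhead, hn⟩
    exact ⟨s.horn, ⟨s, hs, rfl, hn⟩, hhead⟩
  · rintro ⟨_, ⟨s, hs, rfl, hn⟩, hhead⟩
    exact ⟨s, hs, hhead, hn⟩

lemma Hval_pos_iff {P : LProgram α} {r : LPRule α} {a : α} :
    0 < Hval P r a ↔ r ∈ reductSingleton P a := by
  rw [mem_reductSingleton, Hval]
  split_ifs with h <;> simp [h]

theorem abased_iff_FGH_general (A : Finset α) (P : LProgram α)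
    (hproper : ∀ r ∈ P, r.proper)
    (hAprog : ∀ r ∈ P, (↑r.pos : Set α) ⊆ ↑A ∧ (↑r.neg : Set α) ∩ ↑A = ∅)
    (a : α) (haA : a ∉ A) :
    isABased P ↑A (↑A ∪ {a}) ↔
      (Fval P ↑A a = 0 ∧ 0 < Gval P a ∧
        ∃ Q : LProgram α, ↑Q ⊆ RA A ∧ LM (↑Q : Set (LPRule α)) = (↑A : Set α) ∧
          ∀ r ∈ Q, 0 < Hval P r a) := by
  have hHval : ∀ Q : LProgram α, (∀ r ∈ Q, 0 < Hval P r a) ↔ Q ⊆ reductSingleton P a :=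
    fun Q => by simp only [Hval_pos_iff, Finset.subset_iff]
  simp only [hHval]
  rw [isABased_iff_isStable hAprog (Finset.mem_coe.not.2 haA), isStable,
    reduct_union_singleton hAprog, eq_comm,
    LM_eq_union_singleton_iff fun r hr => pos_subset_of_mem_reductSingleton hAprog hr,
    exists_subset_RA_LM_eq_iff fun r hr => mem_RA_of_mem_reductSingleton hAprog hproper hr,
    Fval_eq_zero_iff, Gval_pos_iff]
  rfl

/-- for a finite set of atoms `A`, a proper `A`-program `P` and
`a ∈ At(P) \ A`: `A ∪ {a}` is an `A`-based stable model of `P` iff `F(a) = 0`,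
`G(a) > 0`, and there is a Horn program `Q ∈ 𝒫(A)` (i.e. `Q ⊆ R(A)` with `LM(Q) = A`)
such that `H(r,a) > 0` for every rule `r ∈ Q`. -/
theorem abased_iff_FGH (A : Finset α) (P : LProgram α)
    (hproper : ∀ r ∈ P, r.proper)
    (hAprog : ∀ r ∈ P, (↑r.pos : Set α) ⊆ ↑A ∧ (↑r.neg : Set α) ∩ ↑A = ∅)
    (a : α) (haP : a ∈ atomsP P) (haA : a ∉ A) :
    isABased P ↑A (↑A ∪ {a}) ↔
      (Fval P ↑A a = 0 ∧ 0 < Gval P a ∧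
        ∃ Q : LProgram α, ↑Q ⊆ RA A ∧ LM (↑Q : Set (LPRule α)) = (↑A : Set α) ∧
          ∀ r ∈ Q, 0 < Hval P r a) :=
  abased_iff_FGH_general A P hproper hAprog a haA
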